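/- Let X be a real Hilbert space and Y a finite-dimensional real Hilbert space, A : X → Y a bounded linear operator, and (X_j)_{j∈ℕ} a sequence of closed subspaces of X with X_j ⊆ X_{j+1} for all j, with (ker A)^⊥ ⊆ closure(∪_{j∈ℕ} X_j), and such that the restriction of A to each X_j is surjective onto Y. Let g ∈ Y, suppose A f = g has a solution of norm at most ρ' in X₀, fix τ > 1, and let (η_l, δ_l) be nonnegative null sequences and j_l → ∞ in ℕ; for each l let B_l : X → Y be bounded linear with ‖B_l − A‖ ≤ η_l and g_l ∈ Y with ‖g_l − g‖ ≤ δ_l. For each l define the RESESOP iterates (f_n^l)_{n∈ℕ} in X_{j_l} by: f_0^l ∈ X_{j_l} with ‖f_0^l‖ ≤ ρ' and f_0^l orthogonal (within X_{j_l}) to ker A ∩ X_{j_l}; and, given f_n^l, set w_n^l := B_l f_n^l − g_l; if ‖w_n^l‖ ≤ τ(ρ' η_l + δ_l) set f_{n+1}^l := f_n^l, otherwise set u_n^l := P_{X_{j_l}}(B_l* w_n^l), α_n^l := ⟪w_n^l, g_l⟫, ξ_n^l := (ρ' η_l + δ_l)‖w_n^l‖, t_n^l := (⟪u_n^l, f_n^l⟫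 − (α_n^l + ξ_n^l))/‖u_n^l‖², and f_{n+1}^l := f_n^l − t_n^l u_n^l. Define the exact SESOP iterates (f_n)_{n∈ℕ} in X by: f_0 ∈ (ker A)^⊥ with ‖f_0‖ ≤ ρ'; and, given f_n, set w_n := A f_n − g; if w_n = 0 set f_{n+1} := f_n, otherwise u_n := A* w_n, t_n := (⟪u_n, f_n⟫ − ⟪w_n, g⟫)/‖u_n‖², f_{n+1} := f_n − t_n u_n. Assume f_0^l → f_0 in X as l → ∞, and assume the step sizes t_n^l and t_n are uniformly bounded over all n and l. Then for every fixed n ∈ ℕ, the iterates converge: f_n^l → f_n in X as l → ∞. -/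

import Mathlib

/-!
Induction on `n`. If `fₙˡ → fₙ`, then the residuals `wₙˡ → wₙ` and the directions `uₙˡ → uₙ`,
the latter because `uₙ = A* wₙ` lies in `(ker A)ᗮ`, where the projections onto the nested `X_j`
converge strongly to the identity. If `wₙ = 0`, then `uₙ = 0` and the bounded step sizes make
the correction `tₙˡ uₙˡ` vanish in the limit. Otherwise `uₙ ≠ 0` because `wₙ ∈ range A`, so the
step sizes converge; and since `‖wₙˡ‖ → ‖wₙ‖ > 0` while `τ(ρ'ηₗ + δₗ) → 0`, the discrepancy
principle eventually fails, so the regularized step is eventually always taken.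
-/

open Filter Topology
open scoped RealInnerProductSpace

theorem Filter.Tendsto.clm_apply {ι 𝕜 E F : Type*} [NontriviallyNormedField 𝕜]
    [SeminormedAddCommGroup E] [NormedSpace 𝕜 E] [SeminormedAddCommGroup F] [NormedSpace 𝕜 F]
    {L : Filter ι} {T : ι → E →L[𝕜] F} {T₀ : E →L[𝕜] F} {x : ι → E} {x₀ : E}
    (hT : Tendsto T L (𝓝 T₀)) (hx : Tendsto x L (𝓝 x₀)) :
    Tendsto (fun i => T i (x i)) L (𝓝 (T₀ x₀)) :=
  (isBoundedBilinearMap_apply.continuous.tendsto (T₀, x₀)).comp (hT.prodMk_nhds hx)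

theorem tendsto_of_forall_eq_or_eq_sub_smul {ι E : Type*} [SeminormedAddCommGroup E]
    [NormedSpace ℝ E] {L : Filter ι} {a b d : ι → E} {s : ι → ℝ} {x : E} {C : ℝ}
    (ha : Tendsto a L (𝓝 x)) (hd : Tendsto d L (𝓝 0)) (hs : ∀ i, |s i| ≤ C)
    (hb : ∀ i, b i = a i ∨ b i = a i - s i • d i) :
    Tendsto b L (𝓝 x) := by
  refine ha.congr_dist (squeeze_zero (fun _ => dist_nonneg) (fun i => ?_)
    (by simpa using hd.norm.const_mul C))
  show dist (a i) (b i) ≤ C * ‖d i‖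
  rcases hb i with h | h
  · rw [h, dist_self]
    exact mul_nonneg ((abs_nonneg _).trans (hs i)) (norm_nonneg _)
  · rw [h, dist_eq_norm, sub_sub_cancel, norm_smul, Real.norm_eq_abs]
    exact mul_le_mul_of_nonneg_right (hs i) (norm_nonneg _)

section InnerProductSpace

variable {X Y : Type*} [NormedAddCommGroup X] [InnerProductSpace ℝ X]
  [NormedAddCommGroup Y] [InnerProductSpace ℝ Y]

theorem Submodule.tendsto_starProjection_of_mem_closure_iUnion [CompleteSpace X] {ι : Type*}
    [Preorder ι] {U : ι → Submodule ℝ X} [∀ i, (U i).HasOrthogonalProjection] (hU : Monotone U)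
    {x : X} (hx : x ∈ closure (⋃ i, (U i : Set X))) :
    Tendsto (fun i => (U i).starProjection x) atTop (𝓝 x) := by
  convert Submodule.starProjection_tendsto_closure_iSup U hU x
  refine ((⨆ i, U i).topologicalClosure.starProjection_eq_self_iff.2 ?_).symm
  rw [← SetLike.mem_coe, Submodule.topologicalClosure_coe]
  exact closure_mono (Set.iUnion_subset fun i => SetLike.coe_subset_coe.2 (le_iSup U i)) hx

theorem Submodule.tendsto_starProjection_apply {ι : Type*} {L : Filter ι}
    {K : ι → Submodule ℝ X} [∀ i, (K i).HasOrthogonalProjection] {y : ι → X} {y₀ : X}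
    (hy : Tendsto y L (𝓝 y₀)) (hK : Tendsto (fun i => (K i).starProjection y₀) L (𝓝 y₀)) :
    Tendsto (fun i => (K i).starProjection (y i)) L (𝓝 y₀) := by
  refine hK.congr_dist (squeeze_zero (fun _ => dist_nonneg) (fun i => ?_)
    (tendsto_iff_dist_tendsto_zero.1 hy))
  rw [dist_comm]
  simpa using (K i).lipschitzWith_starProjection.dist_le_mul (y i) y₀

variable [CompleteSpace X] [CompleteSpace Y]

theorem ContinuousLinearMap.adjoint_apply_mem_orthogonal_ker (A : X →L[ℝ] Y) (y : Y) :
    A.adjoint y ∈ (LinearMap.ker (A : X →ₗ[ℝ] Y))ᗮ := by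
  rw [Submodule.mem_orthogonal']
  intro v hv
  rw [A.adjoint_inner_left, show A v = 0 from hv, inner_zero_right]

theorem ContinuousLinearMap.adjoint_apply_ne_zero_of_mem_range (A : X →L[ℝ] Y) {y : Y}
    (hy : y ∈ LinearMap.range (A : X →ₗ[ℝ] Y)) (hy₀ : y ≠ 0) : A.adjoint y ≠ 0 := by
  obtain ⟨x, rfl⟩ := hy
  intro (h : A.adjoint (A x) = 0)
  refine hy₀ (inner_self_eq_zero (𝕜 := ℝ) |>.1 ?_)
  calc ⟪A x, A x⟫ = ⟪A.adjoint (A x), x⟫ := (A.adjoint_inner_left x (A x)).symm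
    _ = 0 := by rw [h, inner_zero_left]

theorem tendsto_resesop_step {ι : Type*} {L : Filter ι} (A : X →L[ℝ] Y) {g : Y}
    (hg : g ∈ LinearMap.range (A : X →ₗ[ℝ] Y))
    {B : ι → X →L[ℝ] Y} (hB : Tendsto B L (𝓝 A)) {gl : ι → Y} (hgl : Tendsto gl L (𝓝 g))
    {ε : ι → ℝ} (hε : Tendsto ε L (𝓝 0)) (τ : ℝ)
    {K : ι → Submodule ℝ X} [∀ i, CompleteSpace (K i)]
    (hK : ∀ v ∈ (LinearMap.ker (A : X →ₗ[ℝ] Y))ᗮ,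
      Tendsto (fun i => (K i).starProjection v) L (𝓝 v))
    {x x' : ι → X} {w : ι → Y} {u : ι → X} {t : ι → ℝ} {C : ℝ}
    {x₀ x₀' : X} {w₀ : Y} {u₀ : X} {t₀ : ℝ} (hx : Tendsto x L (𝓝 x₀))
    (hw : ∀ i, w i = B i (x i) - gl i)
    (hu : ∀ i, u i = ((K i).orthogonalProjectionOnto ((B i).adjoint (w i)) : X))
    (ht : ∀ i, t i = (⟪u i, x i⟫ - (⟪w i, gl i⟫ + ε i * ‖w i‖)) / ‖u i‖ ^ 2)
    (hC : ∀ i, |t i| ≤ C)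
    (hstep : ∀ i, (‖w i‖ ≤ τ * ε i → x' i = x i) ∧
      (¬ ‖w i‖ ≤ τ * ε i → x' i = x i - t i • u i))
    (hw₀ : w₀ = A x₀ - g) (hu₀ : u₀ = A.adjoint w₀)
    (ht₀ : t₀ = (⟪u₀, x₀⟫ - ⟪w₀, g⟫) / ‖u₀‖ ^ 2)
    (hstep₀ : (w₀ = 0 → x₀' = x₀) ∧ (w₀ ≠ 0 → x₀' = x₀ - t₀ • u₀)) :
    Tendsto x' L (𝓝 x₀') := by
  have hw_lim : Tendsto w L (𝓝 w₀) := by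
    rw [hw₀]
    exact ((hB.clm_apply hx).sub hgl).congr fun i => (hw i).symm
  have hu_lim : Tendsto u L (𝓝 u₀) := by
    have hadj : Tendsto (fun i => (B i).adjoint (w i)) L (𝓝 u₀) :=
      hu₀ ▸ ((ContinuousLinearMap.adjoint.continuous.tendsto A).comp hB).clm_apply hw_lim
    refine (Submodule.tendsto_starProjection_apply hadj (hK u₀ ?_)).congr fun i => (hu i).symm
    exact hu₀ ▸ A.adjoint_apply_mem_orthogonal_ker w₀
  by_cases hw₀_eq : w₀ = 0
  · have hu₀_eq : u₀ = 0 := by rw [hu₀, hw₀_eq, map_zero]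
    rw [hstep₀.1 hw₀_eq]
    refine tendsto_of_forall_eq_or_eq_sub_smul hx (hu₀_eq ▸ hu_lim) hC fun i => ?_
    by_cases h : ‖w i‖ ≤ τ * ε i
    exacts [Or.inl ((hstep i).1 h), Or.inr ((hstep i).2 h)]
  · have hu₀_ne : u₀ ≠ 0 := hu₀ ▸ A.adjoint_apply_ne_zero_of_mem_range
      (hw₀ ▸ sub_mem (LinearMap.mem_range_self _ x₀) hg) hw₀_eq
    have ht_lim : Tendsto t L (𝓝 t₀) := by
      have hξ : Tendsto (fun i => ε i * ‖w i‖) L (𝓝 0) := by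
        simpa using hε.mul hw_lim.norm
      have hnum := (hu_lim.inner hx).sub ((hw_lim.inner hgl).add hξ)
      rw [add_zero] at hnum
      rw [ht₀]
      exact (hnum.div (hu_lim.norm.pow 2) (pow_ne_zero 2 (norm_ne_zero_iff.2 hu₀_ne))).congr
        fun i => (ht i).symm
    have hupdate : ∀ᶠ i in L, x i - t i • u i = x' i := by
      have hτε : Tendsto (fun i => τ * ε i) L (𝓝 0) := by simpa using hε.const_mul τ
      filter_upwards [hτε.eventually_lt hw_lim.norm (norm_pos_iff.2 hw₀_eq)] with i hi
      exact ((hstep i).2 (not_le.2 hi)).symm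
    rw [hstep₀.2 hw₀_eq]
    exact (hx.sub (ht_lim.smul hu_lim)).congr' hupdate

end InnerProductSpace

theorem resesop_iterates_converge_to_sesop_iterates_general
    {X Y : Type*} [NormedAddCommGroup X] [InnerProductSpace ℝ X] [CompleteSpace X]
    [NormedAddCommGroup Y] [InnerProductSpace ℝ Y] [FiniteDimensional ℝ Y]
    (A : X →L[ℝ] Y)
    (Xs : ℕ → Submodule ℝ X) [∀ i, CompleteSpace (Xs i)]
    (hmono : ∀ i, Xs i ≤ Xs (i + 1))
    (hdense : ((LinearMap.ker (A : X →ₗ[ℝ] Y))ᗮ : Set X) ⊆ closure (⋃ i, (Xs i : Set X)))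
    (g : Y) (ρ' τ : ℝ)
    (hsol : ∃ z ∈ Xs 0, A z = g ∧ ‖z‖ ≤ ρ')
    (η δ : ℕ → ℝ)
    (hηlim : Tendsto η atTop (nhds 0)) (hδlim : Tendsto δ atTop (nhds 0))
    (j : ℕ → ℕ) (hj : Tendsto j atTop atTop)
    (B : ℕ → X →L[ℝ] Y) (hB : ∀ l, ‖B l - A‖ ≤ η l)
    (gl : ℕ → Y) (hgl : ∀ l, ‖gl l - g‖ ≤ δ l)
    -- the RESESOP iterates
    (f : ℕ → ℕ → X)
    (w : ℕ → ℕ → Y) (hw : ∀ l n, w l n = B l (f l n) - gl l)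
    (u : ℕ → ℕ → X)
    (hu : ∀ l n, u l n = ((Xs (j l)).orthogonalProjectionOnto ((B l).adjoint (w l n)) : X))
    (t : ℕ → ℕ → ℝ)
    (ht : ∀ l n, t l n =
      (⟪u l n, f l n⟫ - (⟪w l n, gl l⟫ + (ρ' * η l + δ l) * ‖w l n‖)) / ‖u l n‖ ^ 2)
    (hstep : ∀ l n,
      (‖w l n‖ ≤ τ * (ρ' * η l + δ l) → f l (n + 1) = f l n) ∧
      (¬ ‖w l n‖ ≤ τ * (ρ' * η l + δ l) → f l (n + 1) = f l n - t l n • u l n))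
    -- the exact SESOP iterates
    (fex : ℕ → X)
    (wex : ℕ → Y) (hwex : ∀ n, wex n = A (fex n) - g)
    (uex : ℕ → X) (huex : ∀ n, uex n = A.adjoint (wex n))
    (tex : ℕ → ℝ)
    (htex : ∀ n, tex n = (⟪uex n, fex n⟫ - ⟪wex n, g⟫) / ‖uex n‖ ^ 2)
    (hexstep : ∀ n,
      (wex n = 0 → fex (n + 1) = fex n) ∧
      (wex n ≠ 0 → fex (n + 1) = fex n - tex n • uex n))
    -- convergence of the start iterates and uniform boundedness of the step sizes
    (hstart : Tendsto (fun l => f l 0) atTop (nhds (fex 0)))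
    (C : ℝ) (hC : ∀ l n, |t l n| ≤ C) :
    ∀ n, Tendsto (fun l => f l n) atTop (nhds (fex n)) := by
  have hBA : Tendsto B atTop (𝓝 A) :=
    tendsto_iff_norm_sub_tendsto_zero.2 (squeeze_zero (fun _ => norm_nonneg _) hB hηlim)
  have hglg : Tendsto gl atTop (𝓝 g) :=
    tendsto_iff_norm_sub_tendsto_zero.2 (squeeze_zero (fun _ => norm_nonneg _) hgl hδlim)
  have hε : Tendsto (fun l => ρ' * η l + δ l) atTop (𝓝 0) := by
    simpa using (hηlim.const_mul ρ').add hδlim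
  have hK : ∀ v ∈ (LinearMap.ker (A : X →ₗ[ℝ] Y))ᗮ,
      Tendsto (fun l => (Xs (j l)).starProjection v) atTop (𝓝 v) := fun v hv =>
    (Submodule.tendsto_starProjection_of_mem_closure_iUnion (monotone_nat_of_le_succ hmono)
      (hdense hv)).comp hj
  obtain ⟨z, -, hz, -⟩ := hsol
  intro n
  induction n with
  | zero => exact hstart
  | succ n ih =>
    exact tendsto_resesop_step A ⟨z, hz⟩ hBA hglg hε τ hK ih (hw · n) (hu · n) (ht · n) (hC · n)
      (hstep · n) (hwex n) (huex n) (htex n) (hexstep n)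

/-- (Convergence of the RESESOP iterates to the exact SESOP iterates.)
Let `A : X →L[ℝ] Y` with `Y` finite dimensional, `(Xs i)` nested closed subspaces of the
real Hilbert space `X` with `(ker A)ᗮ ⊆ closure (⋃ i, Xs i)` and each restriction of `A`
to `Xs i` surjective. Suppose `A f = g` has a solution of norm at most `ρ'` in `Xs 0`,
`τ > 1`, `η, δ` are nonnegative null sequences and `j l → ∞`; `‖B l - A‖ ≤ η l`,
`‖gl l - g‖ ≤ δ l`. The RESESOP iterates `f l ·` start at `f l 0 ∈ Xs (j l)` with
`‖f l 0‖ ≤ ρ'`, orthogonal within `Xs (j l)` to `ker A ⊓ Xs (j l)`; with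
`w l n = B l (f l n) - gl l`, if `‖w l n‖ ≤ τ(ρ' η l + δ l)` then the iterate is kept,
otherwise it is projected onto the stripe, i.e. `f l (n+1) = f l n - t l n • u l n` with
`u l n = P_{Xs (j l)}((B l)* (w l n))` and
`t l n = (⟪u l n, f l n⟫ - (⟪w l n, gl l⟫ + (ρ' η l + δ l)‖w l n‖))/‖u l n‖²`.
The exact SESOP iterates `fex` start at `fex 0 ∈ (ker A)ᗮ`, `‖fex 0‖ ≤ ρ'`, with
`wex n = A (fex n) - g`: if `wex n = 0` the iterate is kept, otherwise
`fex (n+1) = fex n - tex n • uex n` with `uex n = A* (wex n)` and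
`tex n = (⟪uex n, fex n⟫ - ⟪wex n, g⟫)/‖uex n‖²`. If `f l 0 → fex 0` and the step sizes
`t l n`, `tex n` are uniformly bounded, then `f l n → fex n` as `l → ∞`, for every `n`. -/
theorem resesop_iterates_converge_to_sesop_iterates
    {X Y : Type*} [NormedAddCommGroup X] [InnerProductSpace ℝ X] [CompleteSpace X]
    [NormedAddCommGroup Y] [InnerProductSpace ℝ Y] [FiniteDimensional ℝ Y]
    (A : X →L[ℝ] Y)
    (Xs : ℕ → Submodule ℝ X) [∀ i, CompleteSpace (Xs i)]
    (hmono : ∀ i, Xs i ≤ Xs (i + 1))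
    (hdense : ((LinearMap.ker (A : X →ₗ[ℝ] Y))ᗮ : Set X) ⊆ closure (⋃ i, (Xs i : Set X)))
    (hsurj : ∀ i, ∀ y : Y, ∃ v ∈ Xs i, A v = y)
    (g : Y) (ρ' τ : ℝ) (hτ : 1 < τ)
    (hsol : ∃ z ∈ Xs 0, A z = g ∧ ‖z‖ ≤ ρ')
    (η δ : ℕ → ℝ) (hη0 : ∀ l, 0 ≤ η l) (hδ0 : ∀ l, 0 ≤ δ l)
    (hηlim : Tendsto η atTop (nhds 0)) (hδlim : Tendsto δ atTop (nhds 0))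
    (j : ℕ → ℕ) (hj : Tendsto j atTop atTop)
    (B : ℕ → X →L[ℝ] Y) (hB : ∀ l, ‖B l - A‖ ≤ η l)
    (gl : ℕ → Y) (hgl : ∀ l, ‖gl l - g‖ ≤ δ l)
    -- the RESESOP iterates
    (f : ℕ → ℕ → X)
    (hf0mem : ∀ l, f l 0 ∈ Xs (j l)) (hf0norm : ∀ l, ‖f l 0‖ ≤ ρ')
    (hf0orth : ∀ l, ∀ v : X, v ∈ Xs (j l) → A v = 0 → ⟪f l 0, v⟫ = 0)
    (w : ℕ → ℕ → Y) (hw : ∀ l n, w l n = B l (f l n) - gl l)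
    (u : ℕ → ℕ → X)
    (hu : ∀ l n, u l n = ((Xs (j l)).orthogonalProjectionOnto ((B l).adjoint (w l n)) : X))
    (t : ℕ → ℕ → ℝ)
    (ht : ∀ l n, t l n =
      (⟪u l n, f l n⟫ - (⟪w l n, gl l⟫ + (ρ' * η l + δ l) * ‖w l n‖)) / ‖u l n‖ ^ 2)
    (hstep : ∀ l n,
      (‖w l n‖ ≤ τ * (ρ' * η l + δ l) → f l (n + 1) = f l n) ∧
      (¬ ‖w l n‖ ≤ τ * (ρ' * η l + δ l) → f l (n + 1) = f l n - t l n • u l n))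
    -- the exact SESOP iterates
    (fex : ℕ → X) (hfex0 : fex 0 ∈ (LinearMap.ker (A : X →ₗ[ℝ] Y))ᗮ) (hfex0norm : ‖fex 0‖ ≤ ρ')
    (wex : ℕ → Y) (hwex : ∀ n, wex n = A (fex n) - g)
    (uex : ℕ → X) (huex : ∀ n, uex n = A.adjoint (wex n))
    (tex : ℕ → ℝ)
    (htex : ∀ n, tex n = (⟪uex n, fex n⟫ - ⟪wex n, g⟫) / ‖uex n‖ ^ 2)
    (hexstep : ∀ n,
      (wex n = 0 → fex (n + 1) = fex n) ∧
      (wex n ≠ 0 → fex (n + 1) = fex n - tex n • uex n))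
    -- convergence of the start iterates and uniform boundedness of the step sizes
    (hstart : Tendsto (fun l => f l 0) atTop (nhds (fex 0)))
    (C : ℝ) (hC : ∀ l n, |t l n| ≤ C) (hCex : ∀ n, |tex n| ≤ C) :
    ∀ n, Tendsto (fun l => f l n) atTop (nhds (fex n)) :=
  resesop_iterates_converge_to_sesop_iterates_general A Xs hmono hdense g ρ' τ hsol η δ hηlim hδlim
    j hj B hB gl hgl f w hw u hu t ht hstep fex wex hwex uex huex tex htex hexstep hstart C hC
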